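/- arXiv:2602.01137 — 3 statements merged into one kernel-verified Lean document; each statement's English description precedes it below -/
import Mathlib

section
/- Under the GAN setup, for every measurable function D : Z → (0,1), J(D) ≤ J(D*). Moreover J(D*) is finite, and J(D) = J(D*) holds if and only if D(z) = D*(z) for μ-almost every z in the set {z : p_T(z) + p_G(z) > 0}. -/
open MeasureTheory
open scoped ENNReal

lemma tangent {c y : ℝ} (hc : 0 < c) (hy : 0 < y) :
    Real.log y - Real.log c ≤ y / c - 1 := by
  have h := Real.log_le_sub_one_of_pos (x := y / c) (by positivity)
  rwa [Real.log_div hy.ne' hc.ne'] at h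

lemma tangent_strict {c y : ℝ} (hc : 0 < c) (hy : 0 < y) (hne : y ≠ c) :
    Real.log y - Real.log c < y / c - 1 := by
  have h := Real.log_lt_sub_one_of_pos (x := y / c) (by positivity)
    (fun h => hne ((div_eq_one_iff_eq hc.ne').mp h))
  rwa [Real.log_div hy.ne' hc.ne'] at h

lemma pt_key {s g d : ℝ} (hs : 0 ≤ s) (hg : 0 ≤ g) (hsg : 0 < s + g)
    (hd0 : 0 < d) (hd1 : d < 1) :
    (s * Real.log d + g * Real.log (1 - d) ≤
      s * Real.log (s / (s + g)) + g * Real.log (1 - s / (s + g))) ∧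
    (s * Real.log d + g * Real.log (1 - d) =
        s * Real.log (s / (s + g)) + g * Real.log (1 - s / (s + g)) ↔ d = s / (s + g)) := by
  have hcompl : 1 - s / (s + g) = g / (s + g) := by field_simp; ring
  rcases hs.eq_or_lt with hs0 | hs
  · -- s = 0
    have hg' : 0 < g := by linarith
    rw [← hs0]
    have h1 : (1 : ℝ) - 0 / (0 + g) = 1 := by simp
    have hL : g * Real.log (1 - d) < 0 :=
      mul_neg_of_pos_of_neg hg' (Real.log_neg (by linarith) (by linarith))
    have hne : d ≠ 0 / (0 + g) := by rw [zero_div]; exact hd0.ne'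
    constructor
    · rw [h1]; simp only [zero_mul, zero_add, Real.log_one, mul_zero]; linarith
    constructor
    · intro h
      rw [h1] at h
      simp only [zero_mul, zero_add, Real.log_one, mul_zero] at h
      exact absurd h hL.ne
    · intro h; exact absurd h hne
  rcases hg.eq_or_lt with hg0 | hg
  · -- g = 0
    rw [← hg0]
    have hs' : 0 < s := by linarith
    have h1 : s / (s + 0) = 1 := by field_simp; ring
    have hL : s * Real.log d < 0 :=
      mul_neg_of_pos_of_neg hs' (Real.log_neg hd0 hd1)
    have hne : d ≠ s / (s + 0) := by rw [h1]; exact hd1.ne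
    constructor
    · rw [h1]; simp only [Real.log_one, mul_zero, zero_mul, add_zero, sub_self]; linarith
    constructor
    · intro h
      rw [h1] at h
      simp only [Real.log_one, mul_zero, zero_mul, add_zero, sub_self] at h
      exact absurd h hL.ne
    · intro h; exact absurd h hne
  -- 0 < s, 0 < g
  rw [hcompl]
  have ht : 0 < s + g := hsg
  have hst : 0 < s / (s + g) := by positivity
  have hgt : 0 < g / (s + g) := by positivity
  have e1 : d / (s / (s + g)) = d * (s + g) / s := div_div_eq_mul_div d s (s + g)
  have e2 : (1 - d) / (g / (s + g)) = (1 - d) * (s + g) / g := div_div_eq_mul_div (1 - d) g (s + g)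
  have H1 : s * (Real.log d - Real.log (s / (s + g))) ≤ d * (s + g) - s := by
    have h := tangent hst hd0
    rw [e1] at h
    have h' := mul_le_mul_of_nonneg_left h hs.le
    have es : s * (d * (s + g) / s - 1) = d * (s + g) - s := by field_simp
    linarith [es ▸ h']
  have H2 : g * (Real.log (1 - d) - Real.log (g / (s + g))) ≤ (1 - d) * (s + g) - g := by
    have h := tangent hgt (by linarith : (0:ℝ) < 1 - d)
    rw [e2] at h
    have h' := mul_le_mul_of_nonneg_left h hg.le
    have es : g * ((1 - d) * (s + g) / g - 1) = (1 - d) * (s + g) - g := by field_simp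
    linarith [es ▸ h']
  constructor
  · nlinarith [H1, H2]
  constructor
  · intro heq
    by_contra hne
    have H1' : s * (Real.log d - Real.log (s / (s + g))) < d * (s + g) - s := by
      have h := tangent_strict hst hd0 hne
      rw [e1] at h
      have h' := mul_lt_mul_of_pos_left h hs
      have es : s * (d * (s + g) / s - 1) = d * (s + g) - s := by field_simp
      linarith [es ▸ h']
    nlinarith [H1', H2]
  · intro h
    have h' : 1 - d = g / (s + g) := by rw [h]; field_simp; ring
    rw [h', h]

lemma comb_nonneg {s g d : ℝ} (hs : 0 ≤ s) (hg : 0 ≤ g) (hd0 : 0 ≤ d) (hd1 : d ≤ 1) :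
    0 ≤ -(s * Real.log d + g * Real.log (1 - d)) := by
  have h1 : s * Real.log d ≤ 0 :=
    mul_nonpos_of_nonneg_of_nonpos hs (Real.log_nonpos hd0 hd1)
  have h2 : g * Real.log (1 - d) ≤ 0 :=
    mul_nonpos_of_nonneg_of_nonpos hg (Real.log_nonpos (by linarith) (by linarith))
  linarith

/-- The GAN objective `J(D) = ∫ p_T·log D dμ + ∫ p_G·log (1−D) dμ`, well defined
with values in `[−∞, 0] ⊆ EReal` since both integrands are nonpositive when `D`
takes values in `(0,1)` and the densities are nonnegative: it is minus the sum of
the `lintegral`s of the negations of the integrands. -/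
noncomputable def GANJ {Z : Type*} [MeasurableSpace Z] (μ : Measure Z)
    (pT pG : Z → ℝ) (D : Z → ℝ) : EReal :=
  - (((∫⁻ z, ENNReal.ofReal (-(pT z * Real.log (D z))) ∂μ) +
      (∫⁻ z, ENNReal.ofReal (-(pG z * Real.log (1 - D z))) ∂μ) : ℝ≥0∞) : EReal)

/-- The optimal GAN discriminator: `D*(z) = p_T(z)/(p_T(z)+p_G(z))` where
`p_T(z)+p_G(z) > 0`, and `1/2` elsewhere. -/
noncomputable def Dstar {Z : Type*} (pT pG : Z → ℝ) (z : Z) : ℝ :=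
  if 0 < pT z + pG z then pT z / (pT z + pG z) else 1 / 2

/-- **Proposition 1.** Under the GAN setup, for every measurable
`D : Z → (0,1)`, `J(D) ≤ J(D*)`; moreover `J(D*)` is finite, and `J(D) = J(D*)`
iff `D = D*` μ-a.e. on `{z : p_T(z) + p_G(z) > 0}`. -/
theorem stmt_2 {Z : Type*} [MeasurableSpace Z] (μ : Measure Z) (pT pG : Z → ℝ)
    (hpTm : Measurable pT) (hpGm : Measurable pG)
    (hpT0 : ∀ z, 0 ≤ pT z) (hpG0 : ∀ z, 0 ≤ pG z)
    (hpT1 : ∫⁻ z, ENNReal.ofReal (pT z) ∂μ = 1)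
    (hpG1 : ∫⁻ z, ENNReal.ofReal (pG z) ∂μ = 1) :
    (∀ D : Z → ℝ, Measurable D → (∀ z, D z ∈ Set.Ioo (0:ℝ) 1) →
        GANJ μ pT pG D ≤ GANJ μ pT pG (Dstar pT pG)) ∧
    GANJ μ pT pG (Dstar pT pG) ≠ ⊥ ∧ GANJ μ pT pG (Dstar pT pG) ≠ ⊤ ∧
    (∀ D : Z → ℝ, Measurable D → (∀ z, D z ∈ Set.Ioo (0:ℝ) 1) →
        (GANJ μ pT pG D = GANJ μ pT pG (Dstar pT pG) ↔
          ∀ᵐ z ∂μ, 0 < pT z + pG z → D z = Dstar pT pG z)) := by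
  -- basic facts about Dstar
  have hDs0 : ∀ z, 0 ≤ Dstar pT pG z := by
    intro z; unfold Dstar; split_ifs with h
    · exact div_nonneg (hpT0 z) h.le
    · norm_num
  have hDs1 : ∀ z, Dstar pT pG z ≤ 1 := by
    intro z; unfold Dstar; split_ifs with h
    · rw [div_le_one h]; linarith [hpG0 z]
    · norm_num
  have hDsm : Measurable (Dstar pT pG) := by
    unfold Dstar
    exact Measurable.ite (measurableSet_lt measurable_const (hpTm.add hpGm))
      (hpTm.div (hpTm.add hpGm)) measurable_const
  -- L D : the nonnegative part (sum of two lintegrals)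
  set L : (Z → ℝ) → ℝ≥0∞ := fun D =>
    (∫⁻ z, ENNReal.ofReal (-(pT z * Real.log (D z))) ∂μ) +
      (∫⁻ z, ENNReal.ofReal (-(pG z * Real.log (1 - D z))) ∂μ) with hLdef
  have hGANJ : ∀ D : Z → ℝ, GANJ μ pT pG D = -((L D : ℝ≥0∞) : EReal) := fun D => rfl
  -- combining the two lintegrals
  have hL_eq : ∀ D : Z → ℝ, Measurable D → (∀ z, 0 ≤ D z) → (∀ z, D z ≤ 1) →
      L D = ∫⁻ z, ENNReal.ofReal (-(pT z * Real.log (D z) + pG z * Real.log (1 - D z))) ∂μ := by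
    intro D hD hD0 hD1
    have hm1 : Measurable fun z => ENNReal.ofReal (-(pT z * Real.log (D z))) :=
      ENNReal.measurable_ofReal.comp ((hpTm.mul (Real.measurable_log.comp hD)).neg)
    rw [hLdef]
    beta_reduce
    rw [← lintegral_add_left hm1]
    refine lintegral_congr fun z => ?_
    rw [← ENNReal.ofReal_add
      (by
        have := Real.log_nonpos (hD0 z) (hD1 z)
        nlinarith [hpT0 z])
      (by
        have := Real.log_nonpos (by linarith [hD1 z] : (0:ℝ) ≤ 1 - D z)
          (by linarith [hD0 z] : (1:ℝ) - D z ≤ 1)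
        nlinarith [hpG0 z]), neg_add]
  -- measurability of the combined integrand
  have hφm : ∀ D : Z → ℝ, Measurable D →
      Measurable fun z =>
        ENNReal.ofReal (-(pT z * Real.log (D z) + pG z * Real.log (1 - D z))) := by
    intro D hD
    exact ENNReal.measurable_ofReal.comp
      (((hpTm.mul (Real.measurable_log.comp hD)).add
        (hpGm.mul (Real.measurable_log.comp (measurable_const.sub hD)))).neg)
  -- pointwise optimality
  have hpoint : ∀ D : Z → ℝ, (∀ z, D z ∈ Set.Ioo (0:ℝ) 1) → ∀ z,
      pT z * Real.log (D z) + pG z * Real.log (1 - D z) ≤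
        pT z * Real.log (Dstar pT pG z) + pG z * Real.log (1 - Dstar pT pG z) := by
    intro D hD z
    by_cases h : 0 < pT z + pG z
    · have := (pt_key (hpT0 z) (hpG0 z) h (hD z).1 (hD z).2).1
      simpa [Dstar, h] using this
    · have hT : pT z = 0 := by linarith [hpT0 z, hpG0 z]
      have hG : pG z = 0 := by linarith [hpT0 z, hpG0 z]
      simp [hT, hG]
  -- finiteness of L Dstar
  have hfinL : L (Dstar pT pG) ≠ ⊤ := by
    have hb1 : (∫⁻ z, ENNReal.ofReal (-(pT z * Real.log (Dstar pT pG z))) ∂μ) ≤ 1 := by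
      rw [← hpG1]
      refine lintegral_mono fun z => ENNReal.ofReal_le_ofReal ?_
      unfold Dstar; split_ifs with h
      · rcases (hpT0 z).eq_or_lt with h0 | h0
        · rw [← h0]; simp [hpG0 z]
        · have hlog : Real.log (pT z / (pT z + pG z)) =
              -(Real.log ((pT z + pG z) / pT z)) := by
            rw [← Real.log_inv, inv_div]
          rw [hlog]
          have := Real.log_le_sub_one_of_pos (x := (pT z + pG z) / pT z) (by positivity)
          have h2 : pT z * Real.log ((pT z + pG z) / pT z) ≤
              pT z * ((pT z + pG z) / pT z - 1) := mul_le_mul_of_nonneg_left this h0.le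
          have h3 : pT z * ((pT z + pG z) / pT z - 1) = pG z := by field_simp; ring
          linarith [h3 ▸ h2]
      · have hT : pT z = 0 := by linarith [hpT0 z, hpG0 z]
        simp [hT, hpG0 z]
    have hb2 : (∫⁻ z, ENNReal.ofReal (-(pG z * Real.log (1 - Dstar pT pG z))) ∂μ) ≤ 1 := by
      rw [← hpT1]
      refine lintegral_mono fun z => ENNReal.ofReal_le_ofReal ?_
      unfold Dstar; split_ifs with h
      · have hc : 1 - pT z / (pT z + pG z) = pG z / (pT z + pG z) := by field_simp; ring
        rw [hc]
        rcases (hpG0 z).eq_or_lt with h0 | h0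
        · rw [← h0]; simp [hpT0 z]
        · have hlog : Real.log (pG z / (pT z + pG z)) =
              -(Real.log ((pT z + pG z) / pG z)) := by
            rw [← Real.log_inv, inv_div]
          rw [hlog]
          have := Real.log_le_sub_one_of_pos (x := (pT z + pG z) / pG z) (by positivity)
          have h2 : pG z * Real.log ((pT z + pG z) / pG z) ≤
              pG z * ((pT z + pG z) / pG z - 1) := mul_le_mul_of_nonneg_left this h0.le
          have h3 : pG z * ((pT z + pG z) / pG z - 1) = pT z := by field_simp; ring
          linarith [h3 ▸ h2]
      · have hG : pG z = 0 := by linarith [hpT0 z, hpG0 z]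
        simp [hG, hpT0 z]
    have : L (Dstar pT pG) ≤ 2 := by
      rw [hLdef]
      calc _ ≤ (1 : ℝ≥0∞) + 1 := add_le_add hb1 hb2
      _ = 2 := by norm_num
    exact ne_top_of_le_ne_top (by norm_num) this
  -- main inequality at the level of L
  have hleL : ∀ D : Z → ℝ, Measurable D → (∀ z, D z ∈ Set.Ioo (0:ℝ) 1) →
      L (Dstar pT pG) ≤ L D := by
    intro D hD hmem
    rw [hL_eq (Dstar pT pG) hDsm hDs0 hDs1,
      hL_eq D hD (fun z => (hmem z).1.le) (fun z => (hmem z).2.le)]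
    exact lintegral_mono fun z =>
      ENNReal.ofReal_le_ofReal (by linarith [hpoint D hmem z])
  refine ⟨?_, ?_, ?_, ?_⟩
  · intro D hD hmem
    rw [hGANJ, hGANJ, EReal.neg_le_neg_iff, EReal.coe_ennreal_le_coe_ennreal_iff]
    exact hleL D hD hmem
  · rw [hGANJ]
    simp only [ne_eq, EReal.neg_eq_bot_iff, EReal.coe_ennreal_eq_top_iff]
    exact hfinL
  · rw [hGANJ]
    simp only [ne_eq, EReal.neg_eq_top_iff]
    exact EReal.coe_ennreal_ne_bot _
  · intro D hD hmem
    have hEq : GANJ μ pT pG D = GANJ μ pT pG (Dstar pT pG) ↔ L D = L (Dstar pT pG) := by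
      rw [hGANJ, hGANJ]
      constructor
      · intro h
        have := congrArg Neg.neg h
        rw [neg_neg, neg_neg] at this
        exact EReal.coe_ennreal_eq_coe_ennreal_iff.mp this
      · intro h; rw [h]
    rw [hEq]
    rw [hL_eq (Dstar pT pG) hDsm hDs0 hDs1,
      hL_eq D hD (fun z => (hmem z).1.le) (fun z => (hmem z).2.le)]
    set φD : Z → ℝ≥0∞ := fun z =>
      ENNReal.ofReal (-(pT z * Real.log (D z) + pG z * Real.log (1 - D z))) with hφDdef
    set φS : Z → ℝ≥0∞ := fun z =>
      ENNReal.ofReal (-(pT z * Real.log (Dstar pT pG z) +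
        pG z * Real.log (1 - Dstar pT pG z))) with hφSdef
    have hφDm : Measurable φD := hφm D hD
    have hφSm : Measurable φS := hφm (Dstar pT pG) hDsm
    have hmono : ∀ z, φS z ≤ φD z := fun z =>
      ENNReal.ofReal_le_ofReal (by linarith [hpoint D hmem z])
    have hfinS : (∫⁻ z, φS z ∂μ) ≠ ⊤ := by
      rw [← hL_eq (Dstar pT pG) hDsm hDs0 hDs1]; exact hfinL
    constructor
    · intro h
      have hsub := lintegral_sub hφSm hfinS (Filter.Eventually.of_forall hmono)
      have hz : (∫⁻ z, (φD z - φS z) ∂μ) = 0 := by rw [hsub, h, tsub_self]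
      have hae := (lintegral_eq_zero_iff (hφDm.sub hφSm)).mp hz
      filter_upwards [hae] with z hz0 hpos
      have heqφ : φD z = φS z :=
        le_antisymm (tsub_eq_zero_iff_le.mp hz0) (hmono z)
      have hA : -(pT z * Real.log (D z) + pG z * Real.log (1 - D z)) =
          -(pT z * Real.log (Dstar pT pG z) + pG z * Real.log (1 - Dstar pT pG z)) :=
        (ENNReal.ofReal_eq_ofReal_iff
          (comb_nonneg (hpT0 z) (hpG0 z) (hmem z).1.le (hmem z).2.le)
          (comb_nonneg (hpT0 z) (hpG0 z) (hDs0 z) (hDs1 z))).mp heqφ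
      have hB : pT z * Real.log (D z) + pG z * Real.log (1 - D z) =
          pT z * Real.log (Dstar pT pG z) + pG z * Real.log (1 - Dstar pT pG z) := by
        linarith
      have := (pt_key (hpT0 z) (hpG0 z) hpos (hmem z).1 (hmem z).2).2.mp
        (by simpa [Dstar, hpos] using hB)
      simpa [Dstar, hpos] using this
    · intro h
      refine lintegral_congr_ae ?_
      filter_upwards [h] with z hz
      by_cases hpos : 0 < pT z + pG z
      · rw [hz hpos]
      · have hT : pT z = 0 := by linarith [hpT0 z, hpG0 z]
        have hG : pG z = 0 := by linarith [hpT0 z, hpG0 z]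
        simp [hT, hG]
end

section
/- Under the GAN setup, let P and Q be the probability measures on Z with μ-densities p_T and p_G respectively, and let M = (1/2)·(P + Q). Then J(D*) = 2·JSD(P,Q) − log 4; explicitly, ∫ p_T(z)·log(p_T(z)/(p_T(z)+p_G(z))) dμ(z) + ∫ p_G(z)·log(p_G(z)/(p_T(z)+p_G(z))) dμ(z) = 2·((1/2)·KL(P‖M) + (1/2)·KL(Q‖M)) − log 4, where on the set {p_T + p_G = 0} the integrands are taken to be 0. In particular both sides are finite. -/
open MeasureTheory
open scoped ENNReal Classical

/-- Kullback–Leibler divergence `KL(P‖Q) = ∫ log (dP/dQ) dP` when `P ≪ Q` (and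
the log-likelihood ratio is `P`-integrable), and `+∞` otherwise. -/
noncomputable def KLdiv {α : Type*} [MeasurableSpace α] (P Q : Measure α) : EReal :=
  if P ≪ Q ∧ Integrable (llr P Q) P then ((∫ x, llr P Q x ∂P : ℝ) : EReal) else ⊤

lemma gan_aux {Z : Type*} [MeasurableSpace Z] (μ : Measure Z) (p q : Z → ℝ)
    (hpm : Measurable p) (hqm : Measurable q)
    (hp0 : ∀ z, 0 ≤ p z) (hq0 : ∀ z, 0 ≤ q z)
    (hp1 : ∫⁻ z, ENNReal.ofReal (p z) ∂μ = 1)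
    (hq1 : ∫⁻ z, ENNReal.ofReal (q z) ∂μ = 1) :
    Integrable (fun z => p z * Real.log (p z / (p z + q z))) μ ∧
    KLdiv (μ.withDensity (fun z => ENNReal.ofReal (p z)))
      (((1 : ℝ≥0∞) / 2) • (μ.withDensity (fun z => ENNReal.ofReal (p z)) +
        μ.withDensity (fun z => ENNReal.ofReal (q z))))
      = ((Real.log 2 + ∫ z, p z * Real.log (p z / (p z + q z)) ∂μ : ℝ) : EReal) := by
  set s : Z → ℝ := fun z => p z + q z with hs
  have hs0 : ∀ z, 0 ≤ s z := fun z => add_nonneg (hp0 z) (hq0 z)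
  have hps : ∀ z, p z ≤ s z := fun z => le_add_of_nonneg_right (hq0 z)
  -- integrability of p and q
  have hiP : Integrable p μ := by
    refine ⟨hpm.aestronglyMeasurable, ?_⟩
    rw [hasFiniteIntegral_iff_ofReal (Filter.Eventually.of_forall hp0), hp1]
    exact ENNReal.one_lt_top
  have hiQ : Integrable q μ := by
    refine ⟨hqm.aestronglyMeasurable, ?_⟩
    rw [hasFiniteIntegral_iff_ofReal (Filter.Eventually.of_forall hq0), hq1]
    exact ENNReal.one_lt_top
  -- pointwise bounds
  have hbound : ∀ z, |p z * Real.log (p z / s z)| ≤ |q z| := by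
    intro z
    rcases eq_or_lt_of_le (hp0 z) with h0 | h0
    · simp [← h0]
    · have hsz : 0 < s z := lt_of_lt_of_le h0 (hps z)
      have hle0 : p z * Real.log (p z / s z) ≤ 0 := by
        apply mul_nonpos_of_nonneg_of_nonpos (hp0 z)
        exact Real.log_nonpos (div_nonneg (hp0 z) (hs0 z)) ((div_le_one hsz).2 (hps z))
      have hlow : -(q z) ≤ p z * Real.log (p z / s z) := by
        have hlog : Real.log (s z / p z) ≤ s z / p z - 1 :=
          Real.log_le_sub_one_of_pos (div_pos hsz h0)
        have hid : Real.log (p z / s z) = -Real.log (s z / p z) := by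
          rw [← Real.log_inv, inv_div]
        rw [hid]
        have := mul_le_mul_of_nonneg_left hlog (hp0 z)
        have h2 : p z * (s z / p z - 1) = q z := by
          field_simp
          ring
        nlinarith
      rw [abs_of_nonpos hle0, abs_of_nonneg (hq0 z)]
      linarith
  have hmeas1 : Measurable fun z => p z * Real.log (p z / s z) :=
    hpm.mul (Real.measurable_log.comp (hpm.div (hpm.add hqm)))
  have hf1 : Integrable (fun z => p z * Real.log (p z / s z)) μ := by
    refine hiQ.mono hmeas1.aestronglyMeasurable (Filter.Eventually.of_forall ?_)
    intro z
    simpa [← abs_mul] using hbound z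
  -- pointwise log identity
  have hkey : ∀ z, p z * Real.log (2 * p z / s z)
      = p z * Real.log 2 + p z * Real.log (p z / s z) := by
    intro z
    rcases eq_or_lt_of_le (hp0 z) with h0 | h0
    · simp [← h0]
    · have hsz : 0 < s z := lt_of_lt_of_le h0 (hps z)
      rw [mul_div_assoc, Real.log_mul two_ne_zero (by positivity), mul_add]
  -- ∫ p = 1
  have hintp : ∫ z, p z ∂μ = 1 := by
    rw [integral_eq_lintegral_of_nonneg_ae (Filter.Eventually.of_forall hp0)
      hpm.aestronglyMeasurable, hp1, ENNReal.toReal_one]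
  -- measures
  set P : Measure Z := μ.withDensity (fun z => ENNReal.ofReal (p z)) with hPdef
  set Q : Measure Z := μ.withDensity (fun z => ENNReal.ofReal (q z)) with hQdef
  set g : Z → ℝ≥0∞ := fun z => ((1 : ℝ≥0∞) / 2) * ENNReal.ofReal (s z) with hgdef
  have hgm : Measurable g := (measurable_const.mul ((hpm.add hqm).ennreal_ofReal))
  have hgt : ∀ z, g z ≠ ⊤ := fun z =>
    ENNReal.mul_ne_top (by simp) ENNReal.ofReal_ne_top
  have hMg : ((1 : ℝ≥0∞) / 2) • (P + Q) = μ.withDensity g := by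
    rw [hPdef, hQdef, ← withDensity_add_left hpm.ennreal_ofReal,
      show ((fun z => ENNReal.ofReal (p z)) + fun z => ENNReal.ofReal (q z))
          = fun z => ENNReal.ofReal (s z) by
        funext z
        simp [hs, ENNReal.ofReal_add (hp0 z) (hq0 z)],
      ← withDensity_smul _ (show Measurable (fun z => ENNReal.ofReal (s z)) from
        (hpm.add hqm).ennreal_ofReal)]
    congr 1
  set M : Measure Z := ((1 : ℝ≥0∞) / 2) • (P + Q) with hMdef
  set d : Z → ℝ≥0∞ := fun z => ENNReal.ofReal (p z) / g z with hddef
  have hdm : Measurable d := hpm.ennreal_ofReal.div hgm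
  have hPd : P = M.withDensity d := by
    rw [hMg, ← withDensity_mul μ hgm hdm, hPdef]
    congr 1
    funext z
    simp only [Pi.mul_apply, hddef]
    by_cases hg0 : g z = 0
    · have hsz : ENNReal.ofReal (s z) = 0 := by
        rcases mul_eq_zero.1 hg0 with h | h
        · simp at h
        · exact h
      have hpz : p z = 0 := le_antisymm (by
        have := ENNReal.ofReal_eq_zero.1 hsz
        linarith [hps z]) (hp0 z)
      simp [hg0, hpz]
    · rw [ENNReal.mul_div_cancel hg0 (hgt z)]
  -- M is finite
  have hPuniv : P Set.univ = 1 := by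
    rw [hPdef, withDensity_apply _ MeasurableSet.univ, setLIntegral_univ, hp1]
  have hQuniv : Q Set.univ = 1 := by
    rw [hQdef, withDensity_apply _ MeasurableSet.univ, setLIntegral_univ, hq1]
  have hMfin : IsFiniteMeasure M := by
    constructor
    rw [hMdef]
    simp only [Measure.smul_apply, Measure.add_apply, hPuniv, hQuniv, smul_eq_mul]
    exact ENNReal.mul_lt_top (by simp) (by simp)
  have : SigmaFinite M := hMfin.toSigmaFinite
  have hPM : P ≪ M := by
    rw [hPd]; exact withDensity_absolutelyContinuous M d
  have hrn : P.rnDeriv M =ᵐ[M] d := by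
    rw [hPd]; exact Measure.rnDeriv_withDensity M hdm
  -- a.e. positivity of p under P
  have hppos : ∀ᵐ z ∂P, 0 < p z := by
    rw [ae_iff]
    have hmeasset : MeasurableSet {z | ¬ 0 < p z} := by
      simp only [not_lt]
      exact measurableSet_le hpm measurable_const
    rw [hPdef, withDensity_apply _ hmeasset]
    have : ∀ z ∈ {z | ¬ 0 < p z}, ENNReal.ofReal (p z) = 0 := by
      intro z hz
      simp only [Set.mem_setOf_eq, not_lt] at hz
      exact ENNReal.ofReal_eq_zero.2 hz
    rw [setLIntegral_congr_fun hmeasset this]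
    simp
  have hllr : llr P M =ᵐ[P] fun z => Real.log (2 * p z / s z) := by
    filter_upwards [hPM.ae_eq hrn, hppos] with z hz hpz
    show Real.log (P.rnDeriv M z).toReal = _
    rw [hz]
    have h12 : (((1 : ℝ≥0∞) / 2) * ENNReal.ofReal (s z)).toReal = s z / 2 := by
      rw [ENNReal.toReal_mul, ENNReal.toReal_div, ENNReal.toReal_ofReal (hs0 z)]
      simp
      ring
    have hdr : (d z).toReal = 2 * p z / s z := by
      rw [hddef]
      simp only
      rw [ENNReal.toReal_div, h12, ENNReal.toReal_ofReal (hp0 z),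
        div_div_eq_mul_div, mul_comm (p z) 2]
    rw [hdr]
  -- integrability of llr
  have hofreal_eq : (fun z => ENNReal.ofReal (p z)) = fun z => ((p z).toNNReal : ℝ≥0∞) := rfl
  have hfun_eq : (fun z => Real.log (2 * p z / s z) * p z)
      = fun z => p z * Real.log 2 + p z * Real.log (p z / s z) := by
    funext z
    rw [mul_comm]
    exact hkey z
  have hint2 : Integrable (fun z => Real.log (2 * p z / s z)) P := by
    rw [hPdef]
    rw [integrable_withDensity_iff hpm.ennreal_ofReal
      (Filter.Eventually.of_forall fun z => ENNReal.ofReal_lt_top)]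
    have : (fun z => Real.log (2 * p z / s z) * (ENNReal.ofReal (p z)).toReal)
        = fun z => p z * Real.log 2 + p z * Real.log (p z / s z) := by
      funext z
      rw [ENNReal.toReal_ofReal (hp0 z), mul_comm]
      exact hkey z
    rw [this]
    exact (hiP.mul_const _).add hf1
  have hllrInt : Integrable (llr P M) P := (integrable_congr hllr).2 hint2
  refine ⟨hf1, ?_⟩
  rw [KLdiv, if_pos ⟨hPM, hllrInt⟩]
  congr 1
  rw [integral_congr_ae hllr, hPdef, hofreal_eq,
    integral_withDensity_eq_integral_smul hpm.real_toNNReal]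
  have : (fun z => (p z).toNNReal • Real.log (2 * p z / s z))
      = fun z => p z * Real.log 2 + p z * Real.log (p z / s z) := by
    funext z
    rw [NNReal.smul_def, smul_eq_mul, Real.coe_toNNReal _ (hp0 z)]
    exact hkey z
  rw [this, integral_add (hiP.mul_const _) hf1, integral_mul_const, hintp]
  ring

/-- Under the GAN setup, with `P`, `Q` the probability measures
with μ-densities `p_T`, `p_G` and `M = (1/2)·(P + Q)`, the value `J(D*)` of the
GAN objective at the optimal discriminator satisfies
`J(D*) = 2·JSD(P,Q) − log 4`: explicitly,
`∫ p_T·log (p_T/(p_T+p_G)) dμ + ∫ p_G·log (p_G/(p_T+p_G)) dμ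
  = 2·((1/2)·KL(P‖M) + (1/2)·KL(Q‖M)) − log 4`,
and in particular both sides are finite (the two integrands are μ-integrable and
both KL terms are finite). -/
theorem stmt_3 {Z : Type*} [MeasurableSpace Z] (μ : Measure Z) (pT pG : Z → ℝ)
    (hpTm : Measurable pT) (hpGm : Measurable pG)
    (hpT0 : ∀ z, 0 ≤ pT z) (hpG0 : ∀ z, 0 ≤ pG z)
    (hpT1 : ∫⁻ z, ENNReal.ofReal (pT z) ∂μ = 1)
    (hpG1 : ∫⁻ z, ENNReal.ofReal (pG z) ∂μ = 1)
    (P Q M : Measure Z)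
    (hP : P = μ.withDensity (fun z => ENNReal.ofReal (pT z)))
    (hQ : Q = μ.withDensity (fun z => ENNReal.ofReal (pG z)))
    (hM : M = ((1 : ℝ≥0∞) / 2) • (P + Q)) :
    Integrable (fun z => pT z * Real.log (pT z / (pT z + pG z))) μ ∧
    Integrable (fun z => pG z * Real.log (pG z / (pT z + pG z))) μ ∧
    KLdiv P M ≠ ⊤ ∧ KLdiv P M ≠ ⊥ ∧ KLdiv Q M ≠ ⊤ ∧ KLdiv Q M ≠ ⊥ ∧
    ((((∫ z, pT z * Real.log (pT z / (pT z + pG z)) ∂μ) +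
        (∫ z, pG z * Real.log (pG z / (pT z + pG z)) ∂μ) : ℝ)) : EReal) =
      (2 : EReal) * (((1 / 2 : ℝ) : EReal) * KLdiv P M +
        ((1 / 2 : ℝ) : EReal) * KLdiv Q M) - ((Real.log 4 : ℝ) : EReal) := by
  subst hP; subst hQ; subst hM
  obtain ⟨h1, k1⟩ := gan_aux μ pT pG hpTm hpGm hpT0 hpG0 hpT1 hpG1
  obtain ⟨h2, k2⟩ := gan_aux μ pG pT hpGm hpTm hpG0 hpT0 hpG1 hpT1
  have hcomm : (fun z => pG z * Real.log (pG z / (pG z + pT z)))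
      = fun z => pG z * Real.log (pG z / (pT z + pG z)) := by
    funext z; rw [add_comm (pG z)]
  rw [hcomm] at h2 k2
  rw [add_comm (μ.withDensity fun z => ENNReal.ofReal (pG z))
    (μ.withDensity fun z => ENNReal.ofReal (pT z))] at k2
  refine ⟨h1, h2, ?_, ?_, ?_, ?_, ?_⟩
  · rw [k1]; exact EReal.coe_ne_top _
  · rw [k1]; exact EReal.coe_ne_bot _
  · rw [k2]; exact EReal.coe_ne_top _
  · rw [k2]; exact EReal.coe_ne_bot _
  · rw [k1, k2]
    have h2e : (2 : EReal) = ((2 : ℝ) : EReal) := by norm_cast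
    rw [h2e, ← EReal.coe_mul, ← EReal.coe_mul, ← EReal.coe_add, ← EReal.coe_mul,
      ← EReal.coe_sub]
    norm_cast
    rw [show (4 : ℝ) = 2 * 2 by norm_num, Real.log_mul two_ne_zero two_ne_zero]
    ring
end

section
/- Under the GAN setup, J(D*) ≥ −log 4, and J(D*) = −log 4 holds if and only if p_G = p_T μ-almost everywhere (equivalently, if and only if the probability measures on Z with μ-densities p_G and p_T coincide). -/
open MeasureTheory
open scoped ENNReal

/-- One-term bound: `-(a·log(a/s)) ≤ a·log 2 + (s/2 − a)`, strict unless `a = s/2`. -/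
lemma gan_term_le {a s : ℝ} (ha : 0 ≤ a) (hs : 0 < s) :
    -(a * Real.log (a / s)) ≤ a * Real.log 2 + (s / 2 - a) ∧
    (a ≠ s / 2 → -(a * Real.log (a / s)) < a * Real.log 2 + (s / 2 - a)) := by
  rcases ha.eq_or_lt with rfl | hapos
  · constructor
    · simp; positivity
    · intro _; simp; positivity
  · have hsa : 0 < s / a := by positivity
    have hkey : Real.log (a / s) = -Real.log 2 - Real.log (s / (2 * a)) := by
      have h : a / s = ((2 : ℝ) * (s / (2 * a)))⁻¹ := by
        field_simp
      rw [h, Real.log_inv, Real.log_mul (by norm_num) (by positivity)]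
      ring
    have hmul : a * (s / (2 * a)) = s / 2 := by field_simp
    constructor
    · have hlog : Real.log (s / (2 * a)) ≤ s / (2 * a) - 1 :=
        Real.log_le_sub_one_of_pos (by positivity)
      have := mul_le_mul_of_nonneg_left hlog hapos.le
      rw [hkey]; nlinarith [hmul]
    · intro hne
      have hne1 : s / (2 * a) ≠ 1 := by
        intro h1
        apply hne
        field_simp at h1
        linarith
      have hlog : Real.log (s / (2 * a)) < s / (2 * a) - 1 :=
        Real.log_lt_sub_one_of_pos (by positivity) hne1
      have := mul_lt_mul_of_pos_left hlog hapos
      rw [hkey]; nlinarith [hmul]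

/-- Nonnegativity of one term when `0 ≤ a ≤ s`. -/
lemma gan_term_nonneg {a s : ℝ} (ha : 0 ≤ a) (has : a ≤ s) :
    0 ≤ -(a * Real.log (a / s)) := by
  rcases ha.eq_or_lt with rfl | hapos
  · simp
  · have hs : 0 < s := lt_of_lt_of_le hapos has
    have h1 : a / s ≤ 1 := (div_le_one hs).2 has
    have := Real.log_nonpos (by positivity) h1
    nlinarith

/-- Core pointwise facts about the optimal-discriminator integrand. -/
lemma gan_core (a b : ℝ) (ha : 0 ≤ a) (hb : 0 ≤ b) :
    0 ≤ -(a * Real.log (if 0 < a + b then a / (a + b) else 1 / 2)) ∧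
    0 ≤ -(b * Real.log (1 - (if 0 < a + b then a / (a + b) else 1 / 2))) ∧
    -(a * Real.log (if 0 < a + b then a / (a + b) else 1 / 2)) +
      -(b * Real.log (1 - (if 0 < a + b then a / (a + b) else 1 / 2)))
      ≤ (a + b) * Real.log 2 ∧
    (a = b → -(a * Real.log (if 0 < a + b then a / (a + b) else 1 / 2)) +
      -(b * Real.log (1 - (if 0 < a + b then a / (a + b) else 1 / 2)))
      = (a + b) * Real.log 2) ∧
    (a ≠ b → -(a * Real.log (if 0 < a + b then a / (a + b) else 1 / 2)) +
      -(b * Real.log (1 - (if 0 < a + b then a / (a + b) else 1 / 2)))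
      < (a + b) * Real.log 2) := by
  by_cases hs : 0 < a + b
  · rw [if_pos hs]
    have h1d : 1 - a / (a + b) = b / (a + b) := by field_simp; ring
    rw [h1d]
    obtain ⟨hA, hA'⟩ := gan_term_le ha hs
    obtain ⟨hB, hB'⟩ := gan_term_le hb hs
    refine ⟨gan_term_nonneg ha (by linarith), gan_term_nonneg hb (by linarith), by linarith, ?_, ?_⟩
    · rintro rfl
      have ha' : 0 < a := by linarith
      have hdiv : a / (a + a) = 1 / 2 := by field_simp; ring
      rw [hdiv]
      have : Real.log (1 / 2) = -Real.log 2 := by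
        rw [one_div, Real.log_inv]
      rw [this]; ring
    · intro hne
      have hA2 : a ≠ (a + b) / 2 := fun h => hne (by linarith)
      exact lt_of_lt_of_le (by linarith [hA' hA2]) le_rfl
  · have hab : a + b = 0 := le_antisymm (not_lt.1 hs) (by linarith)
    have haz : a = 0 := by linarith
    have hbz : b = 0 := by linarith
    rw [if_neg hs]
    subst haz; subst hbz
    norm_num

lemma gan_core' {Z : Type*} (pT pG : Z → ℝ) (hpT0 : ∀ z, 0 ≤ pT z) (hpG0 : ∀ z, 0 ≤ pG z)
    (z : Z) :
    0 ≤ -(pT z * Real.log (Dstar pT pG z)) ∧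
    0 ≤ -(pG z * Real.log (1 - Dstar pT pG z)) ∧
    -(pT z * Real.log (Dstar pT pG z)) + -(pG z * Real.log (1 - Dstar pT pG z))
      ≤ (pT z + pG z) * Real.log 2 ∧
    (pT z = pG z → -(pT z * Real.log (Dstar pT pG z)) +
      -(pG z * Real.log (1 - Dstar pT pG z)) = (pT z + pG z) * Real.log 2) ∧
    (pT z ≠ pG z → -(pT z * Real.log (Dstar pT pG z)) +
      -(pG z * Real.log (1 - Dstar pT pG z)) < (pT z + pG z) * Real.log 2) := by
  simpa [Dstar] using gan_core (pT z) (pG z) (hpT0 z) (hpG0 z)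


/-- **Proposition 2.** Under the GAN setup, `J(D*) ≥ −log 4`, with
equality iff `p_G = p_T` μ-almost everywhere (equivalently, iff the probability
measures with μ-densities `p_G` and `p_T` coincide). -/
theorem stmt_5 {Z : Type*} [MeasurableSpace Z] (μ : Measure Z) (pT pG : Z → ℝ)
    (hpTm : Measurable pT) (hpGm : Measurable pG)
    (hpT0 : ∀ z, 0 ≤ pT z) (hpG0 : ∀ z, 0 ≤ pG z)
    (hpT1 : ∫⁻ z, ENNReal.ofReal (pT z) ∂μ = 1)
    (hpG1 : ∫⁻ z, ENNReal.ofReal (pG z) ∂μ = 1) :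
    ((-Real.log 4 : ℝ) : EReal) ≤ GANJ μ pT pG (Dstar pT pG) ∧
    (GANJ μ pT pG (Dstar pT pG) = ((-Real.log 4 : ℝ) : EReal) ↔ pG =ᵐ[μ] pT) ∧
    (GANJ μ pT pG (Dstar pT pG) = ((-Real.log 4 : ℝ) : EReal) ↔
      μ.withDensity (fun z => ENNReal.ofReal (pG z)) =
        μ.withDensity (fun z => ENNReal.ofReal (pT z))) := by
  have hcore := gan_core' pT pG hpT0 hpG0
  -- measurability
  have hDm : Measurable (Dstar pT pG) := by
    unfold Dstar
    exact Measurable.ite (measurableSet_lt measurable_const (hpTm.add hpGm))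
      ((hpTm.div (hpTm.add hpGm))) measurable_const
  set F1 : Z → ℝ≥0∞ := fun z => ENNReal.ofReal (-(pT z * Real.log (Dstar pT pG z))) with hF1
  set F2 : Z → ℝ≥0∞ := fun z => ENNReal.ofReal (-(pG z * Real.log (1 - Dstar pT pG z))) with hF2
  set G : Z → ℝ≥0∞ := fun z => ENNReal.ofReal ((pT z + pG z) * Real.log 2) with hGdef
  have hF1m : Measurable F1 :=
    ((hpTm.mul (Real.measurable_log.comp hDm)).neg).ennreal_ofReal
  have hF2m : Measurable F2 :=
    ((hpGm.mul (Real.measurable_log.comp ((measurable_const.sub hDm)))).neg).ennreal_ofReal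
  have hFm : Measurable (fun z => F1 z + F2 z) := hF1m.add hF2m
  have hGm : Measurable G := ((hpTm.add hpGm).mul measurable_const).ennreal_ofReal
  -- pointwise bound
  have hFG : ∀ z, F1 z + F2 z ≤ G z := by
    intro z
    obtain ⟨h1, h2, h3, _, _⟩ := hcore z
    rw [hF1, hF2, hGdef]
    dsimp only
    rw [← ENNReal.ofReal_add h1 h2]
    exact ENNReal.ofReal_le_ofReal h3
  -- J as a single lintegral
  have hJ : GANJ μ pT pG (Dstar pT pG) = -(((∫⁻ z, (F1 z + F2 z) ∂μ : ℝ≥0∞)) : EReal) := by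
    rw [GANJ, lintegral_add_left hF1m]
  -- value of ∫ G
  have hlog4 : Real.log 4 = 2 * Real.log 2 := by
    rw [show (4 : ℝ) = 2 ^ 2 by norm_num, Real.log_pow]
    norm_num
  have hG : ∫⁻ z, G z ∂μ = ENNReal.ofReal (Real.log 4) := by
    have hptwise : ∀ z, G z = (ENNReal.ofReal (pT z) + ENNReal.ofReal (pG z)) *
        ENNReal.ofReal (Real.log 2) := by
      intro z
      rw [hGdef]
      dsimp only
      rw [ENNReal.ofReal_mul (by linarith [hpT0 z, hpG0 z]),
        ENNReal.ofReal_add (hpT0 z) (hpG0 z)]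
    calc ∫⁻ z, G z ∂μ
        = ∫⁻ z, (ENNReal.ofReal (pT z) + ENNReal.ofReal (pG z)) *
            ENNReal.ofReal (Real.log 2) ∂μ := by
          exact lintegral_congr hptwise
      _ = (∫⁻ z, (ENNReal.ofReal (pT z) + ENNReal.ofReal (pG z)) ∂μ) *
            ENNReal.ofReal (Real.log 2) := by
          exact lintegral_mul_const _ (hpTm.ennreal_ofReal.add hpGm.ennreal_ofReal)
      _ = 2 * ENNReal.ofReal (Real.log 2) := by
          rw [lintegral_add_left hpTm.ennreal_ofReal, hpT1, hpG1]; norm_num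
      _ = ENNReal.ofReal (Real.log 4) := by
          rw [hlog4, ENNReal.ofReal_mul (by norm_num)]
          norm_num
  have hGfin : ∫⁻ z, G z ∂μ ≠ ∞ := by rw [hG]; exact ENNReal.ofReal_ne_top
  have hle : ∫⁻ z, (F1 z + F2 z) ∂μ ≤ ∫⁻ z, G z ∂μ := lintegral_mono hFG
  have hFfin : ∫⁻ z, (F1 z + F2 z) ∂μ ≠ ∞ := (lt_of_le_of_lt hle hGfin.lt_top).ne
  -- EReal coercion bookkeeping
  have hcoe : ((ENNReal.ofReal (Real.log 4) : ℝ≥0∞) : EReal) = ((Real.log 4 : ℝ) : EReal) := by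
    rw [EReal.coe_ennreal_ofReal, max_eq_left (by positivity)]
  have hneg : ((-Real.log 4 : ℝ) : EReal) = -((ENNReal.ofReal (Real.log 4) : ℝ≥0∞) : EReal) := by
    rw [hcoe, ← EReal.coe_neg]
  -- equality characterization at the lintegral level
  have hmain : ∫⁻ z, (F1 z + F2 z) ∂μ = ENNReal.ofReal (Real.log 4) ↔ pG =ᵐ[μ] pT := by
    constructor
    · intro heq
      have hsub : ∫⁻ z, (G z - (F1 z + F2 z)) ∂μ = 0 := by
        rw [lintegral_sub hFm hFfin (Filter.Eventually.of_forall hFG), hG, heq, tsub_self]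
      have h0 : (fun z => G z - (F1 z + F2 z)) =ᵐ[μ] 0 :=
        (lintegral_eq_zero_iff (hGm.sub hFm)).1 hsub
      filter_upwards [h0] with z hz
      have hGle : G z ≤ F1 z + F2 z := tsub_eq_zero_iff_le.1 hz
      have hEq : F1 z + F2 z = G z := le_antisymm (hFG z) hGle
      by_contra hne
      obtain ⟨h1, h2, _, _, h5⟩ := hcore z
      have hlt := h5 (fun h => hne h.symm)
      have hspos : 0 < (pT z + pG z) * Real.log 2 := by
        apply lt_of_le_of_lt _ hlt
        linarith
      have : F1 z + F2 z < G z := by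
        rw [hF1, hF2, hGdef]
        dsimp only
        rw [← ENNReal.ofReal_add h1 h2]
        exact (ENNReal.ofReal_lt_ofReal_iff hspos).2 hlt
      exact absurd hEq this.ne
    · intro hae
      have : (fun z => F1 z + F2 z) =ᵐ[μ] G := by
        filter_upwards [hae] with z hz
        obtain ⟨h1, h2, _, h4, _⟩ := hcore z
        rw [hF1, hF2, hGdef]
        dsimp only
        rw [← ENNReal.ofReal_add h1 h2, h4 hz.symm]
      rw [lintegral_congr_ae this, hG]
  have hJiff : GANJ μ pT pG (Dstar pT pG) = ((-Real.log 4 : ℝ) : EReal) ↔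
      ∫⁻ z, (F1 z + F2 z) ∂μ = ENNReal.ofReal (Real.log 4) := by
    rw [hJ, hneg]
    constructor
    · intro h
      have := EReal.neg_strictAnti.injective h
      exact_mod_cast this
    · intro h; rw [h]
  refine ⟨?_, ?_, ?_⟩
  · rw [hJ, hneg, EReal.neg_le_neg_iff]
    exact EReal.coe_ennreal_le_coe_ennreal_iff.2 (hG ▸ hle)
  · rw [hJiff]; exact hmain
  · rw [hJiff, hmain]
    rw [withDensity_eq_iff hpGm.ennreal_ofReal.aemeasurable hpTm.ennreal_ofReal.aemeasurable
      (by rw [hpG1]; exact ENNReal.one_ne_top)]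
    constructor
    · intro h
      filter_upwards [h] with z hz
      rw [hz]
    · intro h
      filter_upwards [h] with z hz
      exact (ENNReal.ofReal_eq_ofReal_iff (hpG0 z) (hpT0 z)).1 hz
end
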